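/- Let D > 0 and M > 0. The function v(x', x_n) = (M + 2D²) x_n log(x_n/D) + x_n (|x'|² - D²) is convex on {x ∈ ℝⁿ : 0 < x_n, |x| < D}, and its Hessian determinant equals 2^{n-1} x_n^{n-2} (M + 2D² - 2|x'|²) ≥ 2M x_n^{n-2} there. -/

import Mathlib

/-!
With `e` the last basis vector, `v = barrier e (M + 2 D²) D`. Writing `u = ⟪e, x⟫`, the Hessian of
`barrier e c D` at `x` is `2u • 1 + e ⊗ w + w ⊗ e` with `w = 2x + (c / 2u - 3u) e`, and
`u · Hess(h, h) = (c - 2|x'|²) ⟪e, h⟫² + 2 ‖⟪e, h⟫ x + u h - 2u ⟪e, h⟫ e‖²`, where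
`|x'|² = ‖x‖² - u²`. So the Hessian is positive semidefinite wherever `2|x'|² ≤ c`, and `v` is
convex on every segment there. By the Weinstein–Aronszajn identity the determinant of a rank-two
perturbation of `2u • 1` reduces to a `2 × 2` determinant, which evaluates to
`(2u)^(n-2) · 2 (c - 2|x'|²)`.
-/

open Real

/-- The Hessian determinant of a function on Euclidean space, computed via
iterated Fréchet derivatives in the standard coordinate directions. -/
noncomputable def hessDet {n : ℕ} (w : EuclideanSpace ℝ (Fin n) → ℝ)
    (x : EuclideanSpace ℝ (Fin n)) : ℝ :=
  (Matrix.of fun i j : Fin n =>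
    fderiv ℝ (fun y => fderiv ℝ w y (EuclideanSpace.single i 1)) x
      (EuclideanSpace.single j 1)).det

open Set Filter Topology Matrix
open scoped RealInnerProductSpace

theorem det_smul_one_add_vecMulVec_add_vecMulVec {ι K : Type*} [Fintype ι] [DecidableEq ι]
    [Field K] {a : K} (ha : a ≠ 0) (hι : 2 ≤ Fintype.card ι) (u w : ι → K) :
    (a • (1 : Matrix ι ι K) + vecMulVec u w + vecMulVec w u).det =
      a ^ (Fintype.card ι - 2) * ((a + u ⬝ᵥ w) ^ 2 - (u ⬝ᵥ u) * (w ⬝ᵥ w)) := by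
  set U : Matrix ι (Fin 2) K := Matrix.of fun i => ![u i, w i]
  set V : Matrix (Fin 2) ι K := Matrix.of ![w, u]
  have hUV : vecMulVec u w + vecMulVec w u = U * V := by
    ext i j
    simp [U, V, Matrix.mul_apply, Fin.sum_univ_two, vecMulVec_apply]
  have hVU : V * U = !![w ⬝ᵥ u, w ⬝ᵥ w; u ⬝ᵥ u, u ⬝ᵥ w] := by
    ext k l
    fin_cases k <;> fin_cases l <;> simp [U, V, Matrix.mul_apply, dotProduct]
  have hsplit : a • (1 : Matrix ι ι K) + U * V = a • (1 + (a⁻¹ • U) * V) := by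
    rw [Matrix.smul_mul, smul_add, smul_smul, mul_inv_cancel₀ ha, one_smul]
  obtain ⟨m, hm⟩ := Nat.exists_eq_add_of_le hι
  rw [add_assoc, hUV, hsplit, det_smul, det_one_add_mul_comm, Matrix.mul_smul, hVU,
    Matrix.det_fin_two]
  simp only [smul_of, smul_cons, smul_eq_mul, Matrix.smul_empty, Matrix.add_apply, one_apply_eq,
    of_apply, cons_val', cons_val_zero, cons_val_fin_one, cons_val_one, ne_eq, zero_ne_one,
    not_false_eq_true, one_apply_ne, zero_add, one_ne_zero]
  rw [hm, Nat.add_sub_cancel_left, pow_add, dotProduct_comm w u]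
  field_simp

theorem det_smul_inner_add_inner_mul_inner_single {ι : Type*} [Fintype ι] [DecidableEq ι]
    {a : ℝ} (ha : a ≠ 0) (hι : 2 ≤ Fintype.card ι) (u w : EuclideanSpace ℝ ι) :
    (Matrix.of fun i j =>
        a * ⟪EuclideanSpace.single i (1 : ℝ), EuclideanSpace.single j 1⟫ +
          ⟪u, EuclideanSpace.single i 1⟫ * ⟪w, EuclideanSpace.single j 1⟫ +
          ⟪w, EuclideanSpace.single i 1⟫ * ⟪u, EuclideanSpace.single j 1⟫).det =
      a ^ (Fintype.card ι - 2) * ((a + ⟪u, w⟫) ^ 2 - ‖u‖ ^ 2 * ‖w‖ ^ 2) := by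
  have hdot : ∀ v v' : EuclideanSpace ℝ ι, v.ofLp ⬝ᵥ v'.ofLp = ⟪v, v'⟫ := fun v v' => by
    rw [EuclideanSpace.inner_eq_star_dotProduct, star_trivial, dotProduct_comm]
  have hmat : (Matrix.of fun i j =>
        a * ⟪EuclideanSpace.single i (1 : ℝ), EuclideanSpace.single j 1⟫ +
          ⟪u, EuclideanSpace.single i 1⟫ * ⟪w, EuclideanSpace.single j 1⟫ +
          ⟪w, EuclideanSpace.single i 1⟫ * ⟪u, EuclideanSpace.single j 1⟫) =
      a • (1 : Matrix ι ι ℝ) + vecMulVec u.ofLp w.ofLp + vecMulVec w.ofLp u.ofLp := by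
    ext i j
    simp [EuclideanSpace.inner_single_right, Matrix.one_apply, vecMulVec_apply, mul_comm, eq_comm]
  rw [hmat, det_smul_one_add_vecMulVec_add_vecMulVec ha hι, hdot, hdot, hdot,
    real_inner_self_eq_norm_sq, real_inner_self_eq_norm_sq]

theorem hessDet_eq_det_of_hasFDerivAt {n : ℕ} {w : EuclideanSpace ℝ (Fin n) → ℝ}
    {w' : EuclideanSpace ℝ (Fin n) → EuclideanSpace ℝ (Fin n) →L[ℝ] ℝ}
    {w'' : EuclideanSpace ℝ (Fin n) → EuclideanSpace ℝ (Fin n) →L[ℝ] ℝ}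
    {x : EuclideanSpace ℝ (Fin n)} (hw : ∀ᶠ y in 𝓝 x, HasFDerivAt w (w' y) y)
    (hw' : ∀ h, HasFDerivAt (fun y => w' y h) (w'' h) x) :
    hessDet w x = (Matrix.of fun i j =>
      w'' (EuclideanSpace.single i 1) (EuclideanSpace.single j 1)).det := by
  unfold hessDet
  congr 1
  ext i j
  have hfd : (fun y => fderiv ℝ w y (EuclideanSpace.single i 1)) =ᶠ[𝓝 x]
      fun y => w' y (EuclideanSpace.single i 1) :=
    hw.mono fun y hy => by simp only [hy.fderiv]
  simp only [Matrix.of_apply]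
  rw [hfd.fderiv_eq, (hw' _).fderiv]

theorem convexOn_of_hasFDerivAt_of_second_deriv_nonneg {E : Type*} [NormedAddCommGroup E]
    [NormedSpace ℝ E] {s : Set E} (hs : Convex ℝ s) {f : E → ℝ} {f' : E → E →L[ℝ] ℝ}
    {f'' : E → E → E →L[ℝ] ℝ} (hf : ∀ x ∈ s, HasFDerivAt f (f' x) x)
    (hf' : ∀ x ∈ s, ∀ h, HasFDerivAt (fun y => f' y h) (f'' x h) x)
    (hf'' : ∀ x ∈ s, ∀ h, 0 ≤ f'' x h h) : ConvexOn ℝ s f := by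
  refine ⟨hs, fun p hp q hq a b ha hb hab => ?_⟩
  have hγ : ∀ t ∈ Icc (0 : ℝ) 1, AffineMap.lineMap p q t ∈ s := fun t ht =>
    hs.lineMap_mem hp hq ht
  have hγ' : ∀ t : ℝ, HasDerivAt (AffineMap.lineMap p q) (q - p) t := fun t =>
    AffineMap.hasDerivAt_lineMap
  have hline : ConvexOn ℝ (Icc (0 : ℝ) 1) (f ∘ AffineMap.lineMap p q) := by
    refine convexOn_of_hasDerivWithinAt2_nonneg (convex_Icc 0 1)
      (fun t ht => ((hf _ (hγ t ht)).comp_hasDerivAt t (hγ' t)).continuousAt.continuousWithinAt)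
      (f' := fun t => f' (AffineMap.lineMap p q t) (q - p))
      (f'' := fun t => f'' (AffineMap.lineMap p q t) (q - p) (q - p)) ?_ ?_ ?_ <;>
    rw [interior_Icc] <;> intro t ht
    · exact ((hf _ (hγ t (Ioo_subset_Icc_self ht))).comp_hasDerivAt t (hγ' t)).hasDerivWithinAt
    · exact ((hf' _ (hγ t (Ioo_subset_Icc_self ht)) _).comp_hasDerivAt t (hγ' t)).hasDerivWithinAt
    · exact hf'' _ (hγ t (Ioo_subset_Icc_self ht)) _
  have := hline.2 (left_mem_Icc.2 zero_le_one) (right_mem_Icc.2 zero_le_one) ha hb hab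
  rw [eq_sub_of_add_eq hab] at this ⊢
  simpa [AffineMap.lineMap_apply_module] using this

section Barrier

variable {E : Type*} [NormedAddCommGroup E] [InnerProductSpace ℝ E]

noncomputable def barrier (e : E) (c D : ℝ) (y : E) : ℝ :=
  c * ⟪e, y⟫ * log (⟪e, y⟫ / D) + ⟪e, y⟫ * (‖y‖ ^ 2 - ⟪e, y⟫ ^ 2 - D ^ 2)

noncomputable def barrierDeriv (e : E) (c D : ℝ) (y : E) : E →L[ℝ] ℝ :=
  (c * (log (⟪e, y⟫ / D) + 1) + ‖y‖ ^ 2 - 3 * ⟪e, y⟫ ^ 2 - D ^ 2) • innerSL ℝ e +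
    (2 * ⟪e, y⟫) • innerSL ℝ y

noncomputable def barrierHessVec (e : E) (c : ℝ) (x : E) : E :=
  (2 : ℝ) • x + (c / (2 * ⟪e, x⟫) - 3 * ⟪e, x⟫) • e

noncomputable def barrierHess (e : E) (c : ℝ) (x h : E) : E →L[ℝ] ℝ :=
  (2 * ⟪e, x⟫) • innerSL ℝ h + ⟪e, h⟫ • innerSL ℝ (barrierHessVec e c x) +
    ⟪barrierHessVec e c x, h⟫ • innerSL ℝ e

variable {e : E} {c D : ℝ}

theorem hasFDerivAt_barrier (hD : D ≠ 0) {y : E} (hy : 0 < ⟪e, y⟫) :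
    HasFDerivAt (barrier e c D) (barrierDeriv e c D y) y := by
  have hu : HasFDerivAt (fun y : E => ⟪e, y⟫) (innerSL ℝ e) y := (innerSL ℝ e).hasFDerivAt
  have hlog := (hu.mul_const D⁻¹).log (div_ne_zero hy.ne' hD)
  have := ((hu.const_mul c).mul hlog).add
    (hu.mul (((hasStrictFDerivAt_norm_sq y).hasFDerivAt.sub (hu.pow 2)).sub_const (D ^ 2)))
  refine this.congr_fderiv (ContinuousLinearMap.ext fun k => ?_)
  simp only [_root_.mul_inv_rev, inv_inv, Nat.add_one_sub_one, pow_one, nsmul_eq_mul,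
    Nat.cast_ofNat, Pi.sub_apply, _root_.add_apply, _root_.smul_apply, coe_innerSL_apply,
    smul_eq_mul, _root_.sub_apply, barrierDeriv]
  field_simp
  ring

theorem hasFDerivAt_barrierDeriv_apply (hD : D ≠ 0) {x : E} (hx : 0 < ⟪e, x⟫) (h : E) :
    HasFDerivAt (fun y => barrierDeriv e c D y h) (barrierHess e c x h) x := by
  have hu : HasFDerivAt (fun y : E => ⟪e, y⟫) (innerSL ℝ e) x := (innerSL ℝ e).hasFDerivAt
  have hh : HasFDerivAt (fun y : E => ⟪y, h⟫) (innerSL ℝ h) x := by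
    simpa [real_inner_comm] using (innerSL ℝ h).hasFDerivAt
  have hlog := (hu.mul_const D⁻¹).log (div_ne_zero hx.ne' hD)
  have := (((((hlog.add_const 1).const_mul c).add (hasStrictFDerivAt_norm_sq x).hasFDerivAt).sub
    ((hu.pow 2).const_mul 3)).sub_const (D ^ 2)).mul_const ⟪e, h⟫ |>.add ((hu.const_mul 2).mul hh)
  refine this.congr_fderiv (ContinuousLinearMap.ext fun k => ?_)
  simp only [_root_.mul_inv_rev, inv_inv, Nat.add_one_sub_one, pow_one, nsmul_eq_mul,
    Nat.cast_ofNat, _root_.add_apply, _root_.smul_apply, _root_.sub_apply, coe_innerSL_apply,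
    smul_eq_mul, barrierHess, barrierHessVec, map_add, map_smul, smul_add, inner_add_left,
    inner_smul_left, ringHom_apply]
  field_simp
  ring

theorem barrierHess_self_nonneg (he : ‖e‖ = 1) {x : E} (hx : 0 < ⟪e, x⟫)
    (hxc : 2 * (‖x‖ ^ 2 - ⟪e, x⟫ ^ 2) ≤ c) (h : E) : 0 ≤ barrierHess e c x h h := by
  have key : ⟪e, x⟫ * barrierHess e c x h h = (c - 2 * (‖x‖ ^ 2 - ⟪e, x⟫ ^ 2)) * ⟪e, h⟫ ^ 2 +
      2 * ‖⟪e, h⟫ • x + ⟪e, x⟫ • h - (2 * ⟪e, x⟫ * ⟪e, h⟫) • e‖ ^ 2 := by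
    rw [norm_sub_sq_real, norm_add_sq_real]
    simp only [barrierHess, barrierHessVec, map_add, map_smul, smul_add, inner_add_left,
      inner_smul_left, ringHom_apply, _root_.add_apply, _root_.smul_apply, coe_innerSL_apply,
      inner_self_eq_norm_sq_to_K, smul_eq_mul, norm_smul, norm_eq_abs, mul_pow, sq_abs,
      inner_smul_right, real_inner_comm, norm_mul, he, mul_one]
    field_simp
    ring
  have : 0 ≤ ⟪e, x⟫ * barrierHess e c x h h := by
    rw [key]
    exact add_nonneg (mul_nonneg (sub_nonneg.2 hxc) (sq_nonneg _)) (by positivity)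
  exact (mul_nonneg_iff_of_pos_left hx).mp this

theorem barrierHessVec_discriminant (he : ‖e‖ = 1) {x : E} (hx : ⟪e, x⟫ ≠ 0) :
    (2 * ⟪e, x⟫ + ⟪e, barrierHessVec e c x⟫) ^ 2 - ‖e‖ ^ 2 * ‖barrierHessVec e c x‖ ^ 2 =
      2 * (c - 2 * (‖x‖ ^ 2 - ⟪e, x⟫ ^ 2)) := by
  rw [barrierHessVec, norm_add_sq_real]
  simp only [inner_add_right, inner_smul_right, inner_self_eq_norm_sq_to_K, he, ringHom_apply,
    one_pow, mul_one, norm_smul, norm_ofNat, mul_pow, inner_smul_left, real_inner_comm e x,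
    norm_eq_abs, sq_abs, one_mul]
  field_simp
  ring

theorem convexOn_barrier (he : ‖e‖ = 1) (hD : D ≠ 0) (hc : 2 * D ^ 2 ≤ c) :
    ConvexOn ℝ {x | 0 < ⟪e, x⟫ ∧ ‖x‖ < D} (barrier e c D) := by
  have hconv : Convex ℝ {x : E | 0 < ⟪e, x⟫ ∧ ‖x‖ < D} := by
    have hset : {x : E | 0 < ⟪e, x⟫ ∧ ‖x‖ < D} = {x | 0 < ⟪e, x⟫} ∩ Metric.ball 0 D := by
      ext x; simp
    rw [hset]
    exact (convex_halfSpace_gt (innerₛₗ ℝ e).isLinear 0).inter (convex_ball 0 D)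
  refine convexOn_of_hasFDerivAt_of_second_deriv_nonneg hconv
    (fun x hx => hasFDerivAt_barrier hD hx.1) (fun x hx => hasFDerivAt_barrierDeriv_apply hD hx.1)
    fun x hx => barrierHess_self_nonneg he hx.1 ?_
  nlinarith [hx.2, norm_nonneg x, sq_nonneg ⟪e, x⟫]

end Barrier

theorem hessDet_barrier {n : ℕ} (hn : 2 ≤ n) (N : Fin n) {c D : ℝ} (hD : D ≠ 0)
    {x : EuclideanSpace ℝ (Fin n)} (hx : 0 < x N) :
    hessDet (barrier (EuclideanSpace.single N (1 : ℝ)) c D) x =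
      2 ^ (n - 1) * x N ^ (n - 2) * (c - 2 * (‖x‖ ^ 2 - x N ^ 2)) := by
  set e : EuclideanSpace ℝ (Fin n) := EuclideanSpace.single N 1
  have he : ‖e‖ = 1 := by simp [e]
  have hex : ∀ y, ⟪e, y⟫ = y N := fun y => by simp [e, EuclideanSpace.inner_single_left]
  have hpos : ∀ᶠ y in 𝓝 x, 0 < ⟪e, y⟫ :=
    ((innerSL ℝ e).continuous.tendsto x).eventually_const_lt (by simpa [hex] using hx)
  rw [hessDet_eq_det_of_hasFDerivAt (hpos.mono fun y hy => hasFDerivAt_barrier hD hy)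
    (hasFDerivAt_barrierDeriv_apply hD (by rwa [hex]))]
  simp only [barrierHess, _root_.add_apply, _root_.smul_apply, innerSL_apply_apply, smul_eq_mul]
  rw [det_smul_inner_add_inner_mul_inner_single (by rw [hex]; positivity) (by simpa using hn),
    Fintype.card_fin, barrierHessVec_discriminant he (by rw [hex]; positivity), hex]
  obtain ⟨m, rfl⟩ := Nat.exists_eq_add_of_le hn
  simp only [Nat.add_sub_cancel_left, show 2 + m - 1 = m + 1 by omega, mul_pow, pow_succ]
  ring

theorem stmt10 (n : ℕ) (hn : 2 ≤ n) (D M : ℝ) (hD : 0 < D) (hM : 0 < M)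
    (xn : EuclideanSpace ℝ (Fin n) → ℝ) (hxn : ∀ x, xn x = x ⟨n - 1, by omega⟩)
    (s : EuclideanSpace ℝ (Fin n) → ℝ) (hs : ∀ x, s x = ‖x‖ ^ 2 - (xn x) ^ 2)
    (S : Set (EuclideanSpace ℝ (Fin n))) (hS : S = {x | 0 < xn x ∧ ‖x‖ < D})
    (v : EuclideanSpace ℝ (Fin n) → ℝ)
    (hv : ∀ x, v x = (M + 2 * D ^ 2) * xn x * Real.log (xn x / D) + xn x * (s x - D ^ 2)) :
    ConvexOn ℝ S v ∧
      ∀ x ∈ S,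
        hessDet v x = (2 : ℝ) ^ (n - 1) * (xn x) ^ (n - 2) * (M + 2 * D ^ 2 - 2 * s x) ∧
        2 * M * (xn x) ^ (n - 2) ≤ hessDet v x := by
  set N : Fin n := ⟨n - 1, by omega⟩
  have hvb : v = barrier (EuclideanSpace.single N 1) (M + 2 * D ^ 2) D := funext fun x => by
    rw [hv, hs, barrier, EuclideanSpace.inner_single_left, hxn]
    simp
  subst hS hvb
  simp only [hs, hxn]
  constructor
  · simpa [EuclideanSpace.inner_single_left] using
      convexOn_barrier (e := EuclideanSpace.single N (1 : ℝ)) (by simp) hD.ne'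
        (by linarith : 2 * D ^ 2 ≤ M + 2 * D ^ 2)
  rintro x ⟨hxN, hxD⟩
  rw [hessDet_barrier hn N hD.ne' hxN]
  refine ⟨rfl, ?_⟩
  have hsD : ‖x‖ ^ 2 - x N ^ 2 < D ^ 2 := by nlinarith [norm_nonneg x, sq_nonneg (x N)]
  have hpow : (2 : ℝ) ≤ 2 ^ (n - 1) := le_self_pow₀ one_le_two (by omega)
  calc 2 * M * x N ^ (n - 2)
      ≤ 2 ^ (n - 1) * (M + 2 * D ^ 2 - 2 * (‖x‖ ^ 2 - x N ^ 2)) * x N ^ (n - 2) :=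
        mul_le_mul_of_nonneg_right (mul_le_mul hpow (by linarith) hM.le (by positivity))
          (by positivity)
    _ = _ := by ring
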